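/- arXiv:2505.01594 — 7 statements merged into one kernel-verified Lean document; each statement's English description precedes it below -/
import Mathlib

section
/- Let (X, 𝒳) be a measurable space, ν a probability measure, 𝒢 ⊆ 𝒳 a sub-σ-algebra, and R a probability kernel such that: (i) x ↦ R_x(B) is 𝒢-measurable for all B ∈ 𝒳; (ii) R is stationary, i.e. ∫ R_x(B) ν(dx) = ν(B) for all B ∈ 𝒳; and (iii) R is almost everywhere proper, i.e. there exists F ∈ 𝒢 with ν(F) = 1 and R_x(A) = δ_x(A) for all A ∈ 𝒢 and x ∈ F. Then R is a regular conditional distribution for ν given 𝒢: for all A ∈ 𝒳 and B ∈ 𝒢, ∫_B R_x(A) ν(dx) = ν(A ∩ B). -/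
open MeasureTheory ProbabilityTheory

/-- A `𝒢`-measurable, stationary and almost everywhere proper probability kernel is a
regular conditional distribution for `ν` given `𝒢`:
`∫_B R_x(A) ν(dx) = ν(A ∩ B)` for all `A ∈ 𝒳` and `B ∈ 𝒢`. -/
theorem proper_stationary_kernel_is_rcd {X : Type*} (𝒢 : MeasurableSpace X) [𝒳 : MeasurableSpace X]
    (ν : Measure X) [IsProbabilityMeasure ν]
    (h𝒢 : 𝒢 ≤ 𝒳)
    (R : Kernel X X) [IsMarkovKernel R]
    (hmeas : ∀ B : Set X, MeasurableSet[𝒳] B → Measurable[𝒢] fun x => R x B)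
    (hstat : ∀ B : Set X, MeasurableSet[𝒳] B → ∫⁻ x, R x B ∂ν = ν B)
    (F : Set X) (hF : MeasurableSet[𝒢] F) (hFν : ν F = 1)
    (hproper : ∀ A : Set X, MeasurableSet[𝒢] A → ∀ x ∈ F, R x A = Measure.dirac x A) :
    ∀ A : Set X, MeasurableSet[𝒳] A → ∀ B : Set X, MeasurableSet[𝒢] B →
      ∫⁻ x in B, R x A ∂ν = ν (A ∩ B) := by
  intro A hA B hB
  have hB' : MeasurableSet[𝒳] B := h𝒢 _ hB
  have hAB : MeasurableSet[𝒳] (A ∩ B) := hA.inter hB'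
  have hFae : ∀ᵐ x ∂ν, x ∈ F := by
    rw [MeasureTheory.ae_iff]
    have : ν Fᶜ = 0 := by
      have := measure_compl (h𝒢 _ hF) (measure_ne_top ν F)
      simp [hFν, measure_univ] at this
      simpa using this
    exact this
  have key : ∀ᵐ x ∂ν, B.indicator (fun x => R x A) x = R x (A ∩ B) := by
    filter_upwards [hFae] with x hxF
    by_cases hxB : x ∈ B
    · rw [Set.indicator_of_mem hxB]
      have h1 : R x (A \ B) = 0 := by
        have hc : R x Bᶜ = 0 := by
          rw [hproper Bᶜ hB.compl x hxF, Measure.dirac_apply' _ hB'.compl]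
          simp [hxB]
        exact le_antisymm (le_trans (measure_mono (fun y hy => hy.2)) hc.le) zero_le
      have := measure_inter_add_diff (μ := R x) A hB'
      rw [h1, add_zero] at this
      exact this.symm
    · rw [Set.indicator_of_notMem hxB]
      have hc : R x B = 0 := by
        rw [hproper B hB x hxF, Measure.dirac_apply' _ hB']
        simp [hxB]
      exact (le_antisymm (le_trans (measure_mono Set.inter_subset_right) hc.le) zero_le).symm
  calc ∫⁻ x in B, R x A ∂ν = ∫⁻ x, B.indicator (fun x => R x A) x ∂ν := by
        rw [lintegral_indicator hB']
    _ = ∫⁻ x, R x (A ∩ B) ∂ν := lintegral_congr_ae key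
    _ = ν (A ∩ B) := hstat _ hAB
end

section
/- Let X be a finite set, ν a probability measure on X with ν({x}) > 0 for all x, and R = [r_{xy}] a row-stochastic X × X matrix satisfying νR = ν (stationarity) and R² = R (idempotence). Then for all x, y ∈ X with r_{xy} > 0, the rows R_x and R_y are equal: r_{xz} = r_{yz} for all z ∈ X. -/
/-!
Each column `w ↦ r w z` of an idempotent `r` is `r`-harmonic. For a stochastic matrix with
stationary law `ν`, the Dirichlet form `∑ ν a r a b (g b - g a)²` of a harmonic `g` vanishes,
so `g` is constant along every edge `r a b > 0` once `ν` is strictly positive.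
-/

open Finset

section DirichletForm

variable {X : Type*} [Fintype X] (ν : X → ℝ) (r : X → X → ℝ)

def dirichletForm (g : X → ℝ) : ℝ :=
  ∑ a, ∑ b, ν a * r a b * (g b - g a) ^ 2

variable {ν r}

theorem dirichletForm_eq (hrrow : ∀ a, ∑ b, r a b = 1)
    (hstat : ∀ b, ∑ a, ν a * r a b = ν b) (g : X → ℝ) :
    dirichletForm ν r g = 2 * ∑ a, ν a * g a * (g a - ∑ b, r a b * g b) := by
  have hsq : ∑ a, ∑ b, ν a * r a b * g b ^ 2 = ∑ b, ν b * g b ^ 2 := by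
    rw [sum_comm]
    exact sum_congr rfl fun b _ => by rw [← hstat b, sum_mul]
  have hcross : ∑ a, ∑ b, ν a * r a b * (g a * g b) = ∑ a, ν a * g a * ∑ b, r a b * g b :=
    sum_congr rfl fun a _ => by rw [mul_sum]; exact sum_congr rfl fun b _ => by ring
  have hdiag : ∑ a, ∑ b, ν a * r a b * g a ^ 2 = ∑ a, ν a * g a ^ 2 :=
    sum_congr rfl fun a _ => by rw [← sum_mul, ← mul_sum, hrrow a, mul_one]
  calc dirichletForm ν r g
      = ∑ a, ∑ b, ν a * r a b * g b ^ 2 - 2 * ∑ a, ∑ b, ν a * r a b * (g a * g b)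
          + ∑ a, ∑ b, ν a * r a b * g a ^ 2 := by
        simp only [dirichletForm, mul_sum, ← sum_sub_distrib, ← sum_add_distrib]
        exact sum_congr rfl fun a _ => sum_congr rfl fun b _ => by ring
    _ = 2 * ∑ a, ν a * g a * (g a - ∑ b, r a b * g b) := by
        rw [hsq, hcross, hdiag]
        simp only [mul_sub, sum_sub_distrib, mul_assoc, ← pow_two]
        ring

theorem dirichletForm_eq_zero_of_harmonic (hrrow : ∀ a, ∑ b, r a b = 1)
    (hstat : ∀ b, ∑ a, ν a * r a b = ν b) {g : X → ℝ} (hg : ∀ a, ∑ b, r a b * g b = g a) :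
    dirichletForm ν r g = 0 := by
  simp [dirichletForm_eq hrrow hstat, hg]

theorem eq_of_dirichletForm_eq_zero (hν : ∀ a, 0 < ν a) (hr : ∀ a b, 0 ≤ r a b) {g : X → ℝ}
    (hg : dirichletForm ν r g = 0) {a b : X} (hab : 0 < r a b) : g a = g b := by
  have hnonneg : ∀ a b, 0 ≤ ν a * r a b * (g b - g a) ^ 2 := fun a b =>
    mul_nonneg (mul_nonneg (hν a).le (hr a b)) (sq_nonneg _)
  have hrow := (sum_eq_zero_iff_of_nonneg fun a _ => sum_nonneg fun b _ => hnonneg a b).mp hg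
    a (mem_univ a)
  have hterm := (sum_eq_zero_iff_of_nonneg fun b _ => hnonneg a b).mp hrow b (mem_univ b)
  have hsq : (g b - g a) ^ 2 = 0 := by
    simpa [(hν a).ne', hab.ne'] using hterm
  exact (sub_eq_zero.mp (pow_eq_zero_iff two_ne_zero |>.mp hsq)).symm

end DirichletForm

theorem idempotent_stochastic_matrix_rows_eq_general {X : Type*} [Fintype X]
    (ν : X → ℝ) (hνpos : ∀ x, 0 < ν x)
    (r : X → X → ℝ) (hrnonneg : ∀ x y, 0 ≤ r x y) (hrrow : ∀ x, ∑ y, r x y = 1)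
    (hstat : ∀ y, ∑ x, ν x * r x y = ν y)
    (hidem : ∀ x y, ∑ z, r x z * r z y = r x y) :
    ∀ x y, 0 < r x y → ∀ z, r x z = r y z := fun _ _ hxy z =>
  eq_of_dirichletForm_eq_zero (g := fun w => r w z) hνpos hrnonneg
    (dirichletForm_eq_zero_of_harmonic hrrow hstat fun w => hidem w z) hxy

/-- For a row-stochastic matrix `r` on a finite set that is stationary w.r.t. a strictly
positive probability vector `ν` and idempotent, `r x y > 0` implies that rows `x` and `y`
coincide. -/
theorem idempotent_stochastic_matrix_rows_eq {X : Type*} [Fintype X]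
    (ν : X → ℝ) (hνpos : ∀ x, 0 < ν x) (hνsum : ∑ x, ν x = 1)
    (r : X → X → ℝ) (hrnonneg : ∀ x y, 0 ≤ r x y) (hrrow : ∀ x, ∑ y, r x y = 1)
    (hstat : ∀ y, ∑ x, ν x * r x y = ν y)
    (hidem : ∀ x y, ∑ z, r x z * r z y = r x y) :
    ∀ x y, 0 < r x y → ∀ z, r x z = r y z :=
  idempotent_stochastic_matrix_rows_eq_general ν hνpos r hrnonneg hrrow hstat hidem
end

section
/- Let X be a finite set, ν a probability measure on X with ν({x}) > 0 for all x, and R a row-stochastic matrix with νR = ν and R² = R. Define x ~ y iff R_x = R_y (equal rows). Then each equivalence class C satisfies R_x(C) = 1 for every x ∈ C, and R_x(·) = ν(· | C) for every x ∈ C, i.e. r_{xy} = ν({y})/ν(C) for x ∈ C and y ∈ C, and r_{xy} = 0 for x ∈ C, y ∉ C. -/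
open Finset

/-!
Each column `w ↦ M w y` of an idempotent stochastic matrix is `M`-harmonic, so by the maximum
principle the set where it attains its maximum is closed under positive transitions. Once each
column has a positive entry (which stationarity with respect to a positive vector forces), this
makes the diagonal entry the column maximum, positivity of entries symmetric and transitive, and
every positive entry `M a z` equal to `M z z`. Hence `M a b > 0` forces equal rows, so each row is
supported on its own class `C`, and stationarity restricted to `C` gives `M x y = ν y / ν(C)`.
-/

theorem eq_of_weighted_sum_eq_of_le {ι R : Type*} [Fintype ι] [Field R] [LinearOrder R]
    [IsStrictOrderedRing R] {p f : ι → R} {c : R} (hp : ∀ i, 0 ≤ p i) (hp1 : ∑ i, p i = 1)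
    (hle : ∀ i, f i ≤ c) (hsum : ∑ i, p i * f i = c) {j : ι} (hj : 0 < p j) : f j = c := by
  have hgap : ∑ i, p i * (c - f i) = 0 := by
    simp only [mul_sub, sum_sub_distrib, ← sum_mul, hp1, one_mul, hsum, sub_self]
  have hj0 := (sum_eq_zero_iff_of_nonneg fun i _ => mul_nonneg (hp i) (sub_nonneg.2 (hle i))).1
    hgap j (mem_univ j)
  linarith [(mul_eq_zero.1 hj0).resolve_left hj.ne']

namespace Matrix

variable {n R : Type*} [Fintype n] [Field R] [LinearOrder R] [IsStrictOrderedRing R]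
  {M : Matrix n n R}

theorem exists_pos_apply_of_vecMul_eq {ν : n → R} (hν : ∀ x, 0 < ν x) (hstat : ν ᵥ* M = ν)
    (y : n) : ∃ w, 0 < M w y := by
  by_contra! h
  have hle : (ν ᵥ* M) y ≤ 0 :=
    sum_nonpos fun w _ => mul_nonpos_of_nonneg_of_nonpos (hν w).le (h w)
  exact (hstat ▸ hle).not_gt (hν y)

theorem apply_pos_trans (hnonneg : ∀ i j, 0 ≤ M i j) (hidem : IsIdempotentElem M)
    {a b c : n} (hab : 0 < M a b) (hbc : 0 < M b c) : 0 < M a c := by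
  calc 0 < M a b * M b c := mul_pos hab hbc
    _ ≤ ∑ w, M a w * M w c :=
      single_le_sum (f := fun w => M a w * M w c)
        (fun w _ => mul_nonneg (hnonneg a w) (hnonneg w c)) (mem_univ b)
    _ = M a c := by rw [← mul_apply, hidem.eq]

variable [DecidableEq n]

theorem apply_eq_max_of_apply_eq_max_of_pos (hM : M ∈ rowStochastic R n)
    (hidem : IsIdempotentElem M) {y m : n} (hmax : ∀ w, M w y ≤ M m y) {a z : n}
    (ha : M a y = M m y) (hz : 0 < M a z) : M z y = M m y := by
  refine eq_of_weighted_sum_eq_of_le (p := M a) (f := fun w => M w y)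
    (fun _ => nonneg_of_mem_rowStochastic hM) (sum_row_of_mem_rowStochastic hM a) hmax ?_ hz
  rw [← mul_apply, hidem.eq, ha]

theorem apply_le_diag (hM : M ∈ rowStochastic R n) (hidem : IsIdempotentElem M) {y : n}
    (hcol : ∃ w, 0 < M w y) (w : n) : M w y ≤ M y y := by
  obtain ⟨v, hv⟩ := hcol
  have : Nonempty n := ⟨y⟩
  obtain ⟨m, hmax⟩ := Finite.exists_max fun w => M w y
  rw [apply_eq_max_of_apply_eq_max_of_pos hM hidem hmax rfl (hv.trans_le (hmax v))]
  exact hmax w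

theorem apply_pos_symm (hM : M ∈ rowStochastic R n) (hidem : IsIdempotentElem M)
    (hcol : ∀ y, ∃ w, 0 < M w y) {a b : n} (hab : 0 < M a b) : 0 < M b a := by
  obtain ⟨v, hv⟩ := hcol a
  rw [apply_eq_max_of_apply_eq_max_of_pos hM hidem (apply_le_diag hM hidem (hcol a)) rfl hab]
  exact hv.trans_le (apply_le_diag hM hidem (hcol a) v)

theorem apply_eq_diag_of_pos (hM : M ∈ rowStochastic R n) (hidem : IsIdempotentElem M)
    (hcol : ∀ y, ∃ w, 0 < M w y) {a z : n} (haz : 0 < M a z) : M a z = M z z :=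
  apply_eq_max_of_apply_eq_max_of_pos hM hidem (apply_le_diag hM hidem (hcol z)) rfl
    (apply_pos_symm hM hidem hcol haz)

theorem row_eq_of_pos (hM : M ∈ rowStochastic R n) (hidem : IsIdempotentElem M)
    (hcol : ∀ y, ∃ w, 0 < M w y) {a b : n} (hab : 0 < M a b) : M b = M a := by
  have hnonneg : ∀ i j, 0 ≤ M i j := fun _ _ => nonneg_of_mem_rowStochastic hM
  have hba := apply_pos_symm hM hidem hcol hab
  funext z
  rcases (hnonneg a z).lt_or_eq with haz | haz
  · rw [apply_eq_diag_of_pos hM hidem hcol haz,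
      apply_eq_diag_of_pos hM hidem hcol (apply_pos_trans hnonneg hidem hba haz)]
  · rcases (hnonneg b z).lt_or_eq with hbz | hbz
    · exact absurd (apply_pos_trans hnonneg hidem hab hbz) haz.not_lt
    · rw [← haz, ← hbz]

theorem apply_eq_zero_of_row_ne (hM : M ∈ rowStochastic R n) (hidem : IsIdempotentElem M)
    (hcol : ∀ y, ∃ w, 0 < M w y) {a b : n} (hne : M b ≠ M a) : M a b = 0 :=
  ((nonneg_of_mem_rowStochastic hM).lt_or_eq.resolve_left
    fun hab => hne (row_eq_of_pos hM hidem hcol hab)).symm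

theorem sum_apply_of_mem_iff_row_eq (hM : M ∈ rowStochastic R n) (hidem : IsIdempotentElem M)
    (hcol : ∀ y, ∃ w, 0 < M w y) {x : n} {C : Finset n} (hC : ∀ y, y ∈ C ↔ M y = M x) :
    ∑ y ∈ C, M x y = 1 := by
  rw [← sum_row_of_mem_rowStochastic hM x]
  exact sum_subset (subset_univ C) fun y _ hy =>
    apply_eq_zero_of_row_ne hM hidem hcol ((hC y).not.1 hy)

theorem apply_eq_div_sum_of_mem_iff_row_eq (hM : M ∈ rowStochastic R n)
    (hidem : IsIdempotentElem M) {ν : n → R} (hν : ∀ x, 0 < ν x) (hstat : ν ᵥ* M = ν)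
    {x : n} {C : Finset n} (hC : ∀ y, y ∈ C ↔ M y = M x) {y : n} (hy : M y = M x) :
    M x y = ν y / ∑ z ∈ C, ν z := by
  have hcol := exists_pos_apply_of_vecMul_eq hν hstat
  have hmass : (∑ z ∈ C, ν z) * M x y = ν y :=
    calc _ = ∑ z ∈ C, ν z * M z y := by
          rw [sum_mul]
          exact sum_congr rfl fun z hz => by rw [(hC z).1 hz]
      _ = ∑ z, ν z * M z y := by
          refine sum_subset (subset_univ C) fun z _ hz => ?_
          have hne : M y ≠ M z := hy ▸ Ne.symm ((hC z).not.1 hz)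
          rw [apply_eq_zero_of_row_ne hM hidem hcol hne, mul_zero]
      _ = ν y := congrFun hstat y
  rw [eq_div_iff (sum_pos (fun z _ => hν z) ⟨x, (hC x).2 rfl⟩).ne', mul_comm, hmass]

end Matrix

open Matrix in
theorem idempotent_stochastic_matrix_block_structure_general {X : Type*} [Fintype X]
    [DecidableEq (X → ℝ)]
    (ν : X → ℝ) (hνpos : ∀ x, 0 < ν x)
    (r : X → X → ℝ) (hrnonneg : ∀ x y, 0 ≤ r x y) (hrrow : ∀ x, ∑ y, r x y = 1)
    (hstat : ∀ y, ∑ x, ν x * r x y = ν y)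
    (hidem : ∀ x y, ∑ z, r x z * r z y = r x y) :
    ∀ x : X,
      (∑ y ∈ univ.filter (fun y => r y = r x), r x y = 1) ∧
      (∀ y, r y = r x → r x y = ν y / ∑ z ∈ univ.filter (fun z => r z = r x), ν z) ∧
      (∀ y, r y ≠ r x → r x y = 0) := by
  classical
  have hM : of r ∈ rowStochastic ℝ X := mem_rowStochastic_iff_sum.2 ⟨hrnonneg, hrrow⟩
  have hMidem : IsIdempotentElem (of r) := by
    ext x y
    exact hidem x y
  have hMstat : ν ᵥ* of r = ν := funext hstat
  have hcol := exists_pos_apply_of_vecMul_eq hνpos hMstat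
  intro x
  have hC : ∀ y, y ∈ univ.filter (fun y => r y = r x) ↔ of r y = of r x :=
    fun y => by simp only [mem_filter, mem_univ, true_and]; rfl
  exact ⟨sum_apply_of_mem_iff_row_eq hM hMidem hcol hC,
    fun y hy => apply_eq_div_sum_of_mem_iff_row_eq hM hMidem hνpos hMstat hC hy,
    fun y hy => apply_eq_zero_of_row_ne hM hMidem hcol hy⟩

/-- For a row-stochastic matrix `r` on a finite set, stationary w.r.t. a strictly positive
probability vector `ν` and idempotent, each equivalence class `C` of the relation
"equal rows" satisfies: `R_x(C) = 1` for `x ∈ C`, and on `C` the row of any `x ∈ C`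
is the conditional distribution `ν(· | C)`, vanishing outside `C`. -/
theorem idempotent_stochastic_matrix_block_structure {X : Type*} [Fintype X]
    [DecidableEq (X → ℝ)]
    (ν : X → ℝ) (hνpos : ∀ x, 0 < ν x) (hνsum : ∑ x, ν x = 1)
    (r : X → X → ℝ) (hrnonneg : ∀ x y, 0 ≤ r x y) (hrrow : ∀ x, ∑ y, r x y = 1)
    (hstat : ∀ y, ∑ x, ν x * r x y = ν y)
    (hidem : ∀ x y, ∑ z, r x z * r z y = r x y) :
    ∀ x : X,
      (∑ y ∈ univ.filter (fun y => r y = r x), r x y = 1) ∧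
      (∀ y, r y = r x → r x y = ν y / ∑ z ∈ univ.filter (fun z => r z = r x), ν z) ∧
      (∀ y, r y ≠ r x → r x y = 0) :=
  idempotent_stochastic_matrix_block_structure_general ν hνpos r hrnonneg hrrow hstat hidem
end

section
/- Let (Xₙ)ₙ≥1 be an MVPS(θ, ν, R): X₁ ∼ ν and P(X_{n+1} ∈ · | X₁,…,Xₙ) = (θν(·) + Σᵢ₌₁ⁿ R_{Xᵢ}(·)) / (θ + Σᵢ₌₁ⁿ R_{Xᵢ}(X)), where R is a signed transition kernel such that θν + Σᵢ₌₁ⁿ R_{Xᵢ} is almost surely a non-negative measure for all n. If (Xₙ) is exchangeable, then for every measurable set B, R_x(B) ≥ 0 for ν-almost every x. -/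
open MeasureTheory Finset

/-!
Fix `ε > 0` and `D = {x | R_x(B) ≤ -ε}`, and suppose `ν(D) > 0`. Exchangeability forces
`P(X₁, …, Xₙ ∈ D) > 0` for every `n`: if this probability vanished for `n = k + 2` but not for
`n = k + 1`, the events `{X₁, …, X_k, X_j ∈ D}`, `j > k`, would be pairwise a.e. disjoint with a
common positive probability, impossible for infinitely many of them in a finite measure space.
But on `{X₁, …, Xₙ ∈ D}` the urn content `θν(B) + Σᵢ R_{Xᵢ}(B) ≤ θν(B) - nε` is negative for
large `n`, against tenability.
-/

section ExchangeableEvents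

variable {Ω : Type*} [MeasurableSpace Ω] {μ : Measure Ω} [IsFiniteMeasure μ] {E : ℕ → Set Ω}

lemma measure_biInter_range_add_two_ne_zero (hE : ∀ i, MeasurableSet (E i))
    (hexch : ∀ I : Finset ℕ, μ (⋂ i ∈ I, E i) = μ (⋂ i ∈ range #I, E i))
    {k : ℕ} (hk : μ (⋂ i ∈ range (k + 1), E i) ≠ 0) :
    μ (⋂ i ∈ range (k + 2), E i) ≠ 0 := by
  intro h0
  set F : ℕ → Set Ω := fun j => ⋂ i ∈ insert (k + j) (range k), E i with hF
  have hμF : ∀ j, μ (F j) = μ (⋂ i ∈ range (k + 1), E i) := fun j => by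
    rw [hF, hexch, card_insert_of_notMem (by simp), card_range]
  have hdisj : ∀ j j', j ≠ j' → AEDisjoint μ (F j) (F j') := fun j j' hjj' => by
    have hF2 : F j ∩ F j' = ⋂ i ∈ insert (k + j) (insert (k + j') (range k)), E i := by
      simp only [hF, set_biInter_insert]; ext; simp only [Set.mem_inter_iff]; tauto
    rw [AEDisjoint, hF2, hexch, card_insert_of_notMem (by simp [hjj']),
      card_insert_of_notMem (by simp), card_range, h0]
  obtain ⟨N, hN⟩ := ENNReal.exists_nat_mul_gt hk (measure_ne_top μ Set.univ)
  refine (hN.trans_le ?_).false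
  calc (N : ENNReal) * μ (⋂ i ∈ range (k + 1), E i) = ∑ j ∈ range N, μ (F j) := by
        simp [hμF]
    _ = μ (⋃ j ∈ range N, F j) :=
        (measure_biUnion_finset₀ (fun j _ j' _ => hdisj j j') fun j _ =>
          (Finset.measurableSet_biInter _ fun i _ => hE i).nullMeasurableSet).symm
    _ ≤ μ Set.univ := measure_mono (Set.subset_univ _)

lemma measure_biInter_range_ne_zero (hE : ∀ i, MeasurableSet (E i))
    (hexch : ∀ I : Finset ℕ, μ (⋂ i ∈ I, E i) = μ (⋂ i ∈ range #I, E i))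
    (h0 : μ (E 0) ≠ 0) (n : ℕ) : μ (⋂ i ∈ range (n + 1), E i) ≠ 0 := by
  induction n with
  | zero => simpa using h0
  | succ n ih => exact measure_biInter_range_add_two_ne_zero hE hexch ih

end ExchangeableEvents

section ExchangeableSequence

variable {Ω X : Type*} [MeasurableSpace Ω] [MeasurableSpace X] {P : Measure Ω}
  {Xseq : ℕ → Ω → X}

lemma map_reindex_eq_of_exchangeable (hXmeas : ∀ n, Measurable (Xseq n))
    (hexch : ∀ n : ℕ, ∀ σ : Equiv.Perm (Fin n),
      Measure.map (fun ω (i : Fin n) => Xseq (σ i) ω) P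
        = Measure.map (fun ω (i : Fin n) => Xseq i ω) P)
    {m : ℕ} (f : Fin m → ℕ) (hf : Function.Injective f) :
    P.map (fun ω i => Xseq (f i) ω) = P.map (fun ω (i : Fin m) => Xseq i ω) := by
  set n := m + univ.sup f + 1
  have hmn : m ≤ n := by omega
  have hfn : ∀ i, f i < n := fun i => by have := le_sup (f := f) (mem_univ i); omega
  obtain ⟨σ, hσ⟩ := Equiv.Perm.exists_extending_pair (Fin.castLE hmn)
    (fun i => (⟨f i, hfn i⟩ : Fin n)) (Fin.castLE_injective hmn)
    fun i j h => hf (Fin.mk.inj_iff.mp h)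
  have hrestrict : Measurable fun (v : Fin n → X) (i : Fin m) => v (Fin.castLE hmn i) := by
    fun_prop
  have hvec : ∀ g : Fin n → ℕ, Measurable fun ω i => Xseq (g i) ω :=
    fun g => measurable_pi_lambda _ fun i => hXmeas _
  have h := congrArg (Measure.map fun (v : Fin n → X) (i : Fin m) => v (Fin.castLE hmn i))
    (hexch n σ)
  rw [Measure.map_map hrestrict (hvec _), Measure.map_map hrestrict (hvec Fin.val)] at h
  simpa [Function.comp_def, hσ] using h

lemma measure_biInter_preimage_eq_of_exchangeable (hXmeas : ∀ n, Measurable (Xseq n))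
    (hexch : ∀ n : ℕ, ∀ σ : Equiv.Perm (Fin n),
      Measure.map (fun ω (i : Fin n) => Xseq (σ i) ω) P
        = Measure.map (fun ω (i : Fin n) => Xseq i ω) P)
    {D : Set X} (hD : MeasurableSet D) (I : Finset ℕ) :
    P (⋂ i ∈ I, Xseq i ⁻¹' D) = P (⋂ i ∈ range #I, Xseq i ⁻¹' D) := by
  have hpi : ∀ {m} (f : Fin m → ℕ), (fun ω i => Xseq (f i) ω) ⁻¹' Set.univ.pi (fun _ => D)
      = ⋂ i ∈ Set.range f, Xseq i ⁻¹' D := fun f => by ext; simp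
  have hvec : ∀ {m} (f : Fin m → ℕ), Measurable fun ω i => Xseq (f i) ω :=
    fun f => measurable_pi_lambda _ fun i => hXmeas _
  have hS := MeasurableSet.univ_pi (fun _ : Fin #I => hD)
  set f := I.orderEmbOfFin rfl
  calc P (⋂ i ∈ I, Xseq i ⁻¹' D)
        = P.map (fun ω i => Xseq (f i) ω) (Set.univ.pi fun _ => D) := by
        rw [Measure.map_apply (hvec f) hS, hpi, range_orderEmbOfFin]; simp
    _ = P.map (fun ω (i : Fin #I) => Xseq i ω) (Set.univ.pi fun _ => D) := by
        rw [map_reindex_eq_of_exchangeable hXmeas hexch f f.injective]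
    _ = P (⋂ i ∈ range #I, Xseq i ⁻¹' D) := by
        rw [Measure.map_apply (hvec Fin.val) hS, hpi]
        congr 1; ext; simp

end ExchangeableSequence

theorem exchangeable_mvps_signed_reinforcement_nonneg_general
    {Ω X : Type*} [MeasurableSpace Ω] [MeasurableSpace X]
    (P : Measure Ω) [IsProbabilityMeasure P]
    (ν : Measure X)
    (θ : ℝ)
    (R : X → SignedMeasure X)
    (hRmeas : ∀ A : Set X, MeasurableSet A → Measurable fun x => R x A)
    (Xseq : ℕ → Ω → X) (hXmeas : ∀ n, Measurable (Xseq n))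
    -- X₁ ∼ ν
    (hinit : Measure.map (Xseq 0) P = ν)
    -- tenability: θν + Σᵢ R_{Xᵢ} is almost surely a non-negative measure
    (htenable : ∀ n : ℕ, ∀ᵐ ω ∂P, ∀ A : Set X, MeasurableSet A →
      0 ≤ θ * (ν A).toReal + ∑ i ∈ range n, R (Xseq i ω) A)
    -- exchangeability
    (hexch : ∀ n : ℕ, ∀ σ : Equiv.Perm (Fin n),
      Measure.map (fun ω (i : Fin n) => Xseq (σ i) ω) P
        = Measure.map (fun ω (i : Fin n) => Xseq i ω) P) :
    ∀ B : Set X, MeasurableSet B → ∀ᵐ x ∂ν, 0 ≤ R x B := by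
  intro B hB
  set D : ℕ → Set X := fun q => {x | R x B ≤ -((q : ℝ) + 1)⁻¹}
  have hD : ∀ q, MeasurableSet (D q) := fun q => measurableSet_le (hRmeas B hB) measurable_const
  have hneg : {x | ¬0 ≤ R x B} ⊆ ⋃ q, D q := fun x hx => by
    obtain ⟨q, hq⟩ := exists_nat_one_div_lt (neg_pos.mpr (not_le.mp hx))
    refine Set.mem_iUnion.mpr ⟨q, ?_⟩
    simp only [D, Set.mem_ofPred_eq]
    linarith [one_div ((q : ℝ) + 1)]
  refine ae_iff.mpr (measure_mono_null hneg (measure_iUnion_null fun q => ?_))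
  by_contra hq
  obtain ⟨n, hn⟩ := exists_nat_gt (θ * (ν B).toReal * (q + 1))
  have hall_in_D : P (⋂ i ∈ range (n + 1), Xseq i ⁻¹' D q) ≠ 0 :=
    measure_biInter_range_ne_zero (fun i => hXmeas i (hD q))
      (measure_biInter_preimage_eq_of_exchangeable hXmeas hexch (hD q))
      (by rwa [← Measure.map_apply (hXmeas 0) (hD q), hinit]) n
  refine hall_in_D (measure_mono_null (fun ω hω => ?_) (ae_iff.mp (htenable (n + 1))))
  simp only [Set.mem_iInter, Set.mem_preimage] at hω
  have hsum : ∑ i ∈ range (n + 1), R (Xseq i ω) B ≤ (n + 1) * -((q : ℝ) + 1)⁻¹ := by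
    simpa using sum_le_card_nsmul (range (n + 1)) (fun i => R (Xseq i ω) B) _ hω
  have hθB : θ * (ν B).toReal < (n + 1) * ((q : ℝ) + 1)⁻¹ := by
    rw [← div_eq_mul_inv, lt_div_iff₀ (by positivity)]; linarith
  simp only [Set.mem_ofPred_eq, not_forall, not_le]
  exact ⟨B, hB, by linarith⟩

/-- For an exchangeable MVPS whose reinforcement is a signed transition kernel `R`
subject to the tenability condition (the urn content `θν + Σᵢ R_{Xᵢ}` is a.s. a
non-negative measure), the reinforcement is in fact non-negative:
for every measurable `B`, `R_x(B) ≥ 0` for `ν`-a.e. `x`. -/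
theorem exchangeable_mvps_signed_reinforcement_nonneg
    {Ω X : Type*} [MeasurableSpace Ω] [MeasurableSpace X] [StandardBorelSpace X]
    (P : Measure Ω) [IsProbabilityMeasure P]
    (ν : Measure X) [IsProbabilityMeasure ν]
    (θ : ℝ) (hθ : 0 < θ)
    (R : X → SignedMeasure X)
    (hRmeas : ∀ A : Set X, MeasurableSet A → Measurable fun x => R x A)
    (Xseq : ℕ → Ω → X) (hXmeas : ∀ n, Measurable (Xseq n))
    -- X₁ ∼ ν
    (hinit : Measure.map (Xseq 0) P = ν)
    -- predictive distributions of the MVPS, in integrated (test-set) form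
    (hpred : ∀ n : ℕ, ∀ A : Set X, MeasurableSet A →
      ∀ S : Set (Fin n → X), MeasurableSet S →
      ∫ ω, Set.indicator A (fun _ => (1 : ℝ)) (Xseq n ω) *
          Set.indicator S (fun _ => (1 : ℝ)) (fun i : Fin n => Xseq i ω) ∂P
        = ∫ ω, ((θ * (ν A).toReal + ∑ i ∈ range n, R (Xseq i ω) A) /
              (θ + ∑ i ∈ range n, R (Xseq i ω) Set.univ)) *
            Set.indicator S (fun _ => (1 : ℝ)) (fun i : Fin n => Xseq i ω) ∂P)
    -- tenability: θν + Σᵢ R_{Xᵢ} is almost surely a non-negative measure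
    (htenable : ∀ n : ℕ, ∀ᵐ ω ∂P, ∀ A : Set X, MeasurableSet A →
      0 ≤ θ * (ν A).toReal + ∑ i ∈ range n, R (Xseq i ω) A)
    -- exchangeability
    (hexch : ∀ n : ℕ, ∀ σ : Equiv.Perm (Fin n),
      Measure.map (fun ω (i : Fin n) => Xseq (σ i) ω) P
        = Measure.map (fun ω (i : Fin n) => Xseq i ω) P) :
    ∀ B : Set X, MeasurableSet B → ∀ᵐ x ∂ν, 0 ≤ R x B :=
  exchangeable_mvps_signed_reinforcement_nonneg_general P ν θ R hRmeas Xseq hXmeas hinit htenable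
    hexch
end

section
/- Let (Xₙ)ₙ≥1 be a balanced MVPS(θ, ν, R) with probability kernel R (R_x(X) = 1 for all x). If for all measurable A, B: ∫ R_x(A) ν(dx) = ν(A) (stationarity) and, for ν-a.e. x, ∫ R_y(A) R_x(dy) = R_x(A) (self-averaging), then (Xₙ) is conditionally identically distributed: for every n ≥ 0 and measurable A, P(X_{n+2} ∈ A | X₁,…,Xₙ) = P(X_{n+1} ∈ A | X₁,…,Xₙ) almost surely. -/
/-!
Write `Wₙ = θ ν + ∑_{i<n} R_{Xᵢ}`, so that `Wₙ / (θ + n)` is the predictive law of `Xₙ`. On an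
event `s` determined by `X₀, …, X_{n-1}`, the predictive identity says that
`(θ + n) · law(Xₙ; s) = E[Wₙ; s]`. Taking `s = Ω`, stationarity of `ν` under `R` shows inductively
that every `Xᵢ` has law `ν`; hence almost surely every `R_{Xᵢ}` is `R`-invariant by self-averaging,
so `Wₙ` and therefore `ρ = law(Xₙ; s)` are `R`-invariant. The predictive identity at time `n + 1`
then reads
`(θ + n + 1) · law(X_{n+1}; s) = E[Wₙ; s] + E[R_{Xₙ}; s] = (θ + n) ρ + ρ R = (θ + n + 1) ρ`.
-/

open MeasureTheory ProbabilityTheory Finset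
open scoped ENNReal

lemma MeasureTheory.Measure.smul_left_cancel {α : Type*} [MeasurableSpace α] {c : ℝ≥0∞}
    (h0 : c ≠ 0) (htop : c ≠ ∞) {μ ν : Measure α} (h : c • μ = c • ν) : μ = ν := by
  simpa [smul_smul, ENNReal.inv_mul_cancel h0 htop] using congr_arg (c⁻¹ • ·) h

lemma MeasureTheory.Measure.measureReal_comp_apply {α β : Type*} [MeasurableSpace α]
    [MeasurableSpace β] {κ : Kernel α β} [IsFiniteKernel κ] {μ : Measure α} {A : Set β}
    (hA : MeasurableSet A) : (κ ∘ₘ μ).real A = ∫ a, (κ a).real A ∂μ := by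
  rw [measureReal_def, Measure.bind_apply hA κ.aemeasurable,
    ← integral_toReal (κ.measurable_coe hA).aemeasurable (ae_of_all _ fun a => measure_lt_top _ _)]
  rfl

namespace ProbabilityTheory.Kernel

variable {α β : Type*} [MeasurableSpace α] [MeasurableSpace β] {R : Kernel α α} {μ ν : Measure α}

lemma invariant_iff_lintegral :
    Invariant R μ ↔ ∀ A, MeasurableSet A → ∫⁻ x, R x A ∂μ = μ A := by
  refine ⟨fun h A hA => ?_, fun h => Measure.ext fun A hA => ?_⟩
  · rw [← Measure.bind_apply hA R.aemeasurable, h.def]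
  · rw [Measure.bind_apply hA R.aemeasurable, h A hA]

lemma Invariant.zero : Invariant R 0 := Measure.bind_zero_left _

lemma Invariant.add (hμ : Invariant R μ) (hν : Invariant R ν) : Invariant R (μ + ν) := by
  rw [Invariant, Measure.comp_add, hμ.def, hν.def]

lemma Invariant.smul (hμ : Invariant R μ) (c : ℝ≥0∞) : Invariant R (c • μ) := by
  rw [Invariant, Measure.comp_smul, hμ.def]

lemma Invariant.finsetSum {ι : Type*} {s : Finset ι} {μ : ι → Measure α}
    (h : ∀ i ∈ s, Invariant R (μ i)) : Invariant R (∑ i ∈ s, μ i) := by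
  classical
  induction s using Finset.induction_on with
  | empty => exact Invariant.zero
  | insert i s hi ih =>
    rw [sum_insert hi]
    exact (h i (mem_insert_self i s)).add (ih fun j hj => h j (mem_insert_of_mem hj))

lemma invariant_comp {κ : Kernel β α} {μ : Measure β} (h : ∀ᵐ b ∂μ, Invariant R (κ b)) :
    Invariant R (κ ∘ₘ μ) := by
  rw [Invariant, Measure.bind_bind κ.aemeasurable R.aemeasurable]
  exact Measure.bind_congr_right h

end ProbabilityTheory.Kernel

section MVPSWeight

variable {X : Type*} [MeasurableSpace X]

/-- `(θ + n)⁻¹ • mvpsWeight θ ν R n x` is the predictive law of the next observation after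
`x 0, …, x (n - 1)`; left unnormalised it is additive in `n`. -/
noncomputable def mvpsWeight (θ : ℝ≥0∞) (ν : Measure X) (R : Kernel X X) (n : ℕ) :
    Kernel (ℕ → X) X :=
  Kernel.const _ (θ • ν) + ∑ i ∈ range n, R.comap (fun x => x i) (measurable_pi_apply i)

variable {θ : ℝ≥0∞} {ν : Measure X} {R : Kernel X X} {n : ℕ}

lemma mvpsWeight_apply (x : ℕ → X) :
    mvpsWeight θ ν R n x = θ • ν + ∑ i ∈ range n, R (x i) := by
  simp [mvpsWeight]

lemma mvpsWeight_apply_univ [IsProbabilityMeasure ν] [IsMarkovKernel R] (x : ℕ → X) :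
    mvpsWeight θ ν R n x Set.univ = θ + n := by
  simp [mvpsWeight_apply]

lemma isFiniteKernel_mvpsWeight [IsProbabilityMeasure ν] [IsMarkovKernel R] (hθ : θ ≠ ∞) :
    IsFiniteKernel (mvpsWeight θ ν R n) :=
  ⟨⟨θ + n, by simpa using hθ.lt_top, fun x => (mvpsWeight_apply_univ x).le⟩⟩

lemma mvpsWeight_real_apply [IsFiniteMeasure ν] [IsFiniteKernel R] {θ : ℝ} (hθ : 0 ≤ θ)
    (x : ℕ → X) (A : Set X) :
    (mvpsWeight (ENNReal.ofReal θ) ν R n x).real A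
      = θ * ν.real A + ∑ i ∈ range n, (R (x i)).real A := by
  simp only [measureReal_def, mvpsWeight_apply, Measure.add_apply, Measure.smul_apply,
    Measure.coe_finsetSum, Finset.sum_apply, smul_eq_mul]
  rw [ENNReal.toReal_add (by finiteness) (by simp [ENNReal.sum_eq_top]), ENNReal.toReal_mul,
    ENNReal.toReal_ofReal hθ, ENNReal.toReal_sum fun i _ => measure_ne_top _ _]

lemma ProbabilityTheory.Kernel.Invariant.mvpsWeight (hν : R.Invariant ν) {x : ℕ → X}
    (hx : ∀ i < n, R.Invariant (R (x i))) : R.Invariant (mvpsWeight θ ν R n x) := by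
  rw [mvpsWeight_apply]
  exact (hν.smul θ).add (Kernel.Invariant.finsetSum fun i hi => hx i (mem_range.1 hi))

lemma comp_mvpsWeight (μ : Measure (ℕ → X)) : mvpsWeight θ ν R n ∘ₘ μ
    = (θ * μ Set.univ) • ν + ∑ i ∈ range n, R ∘ₘ μ.map (fun x => x i) := by
  ext A hA
  have hR : ∀ i, Measurable fun x : ℕ → X => R (x i) A :=
    fun i => (R.measurable_coe hA).comp (measurable_pi_apply i)
  rw [Measure.bind_apply hA (Kernel.aemeasurable _)]
  simp only [mvpsWeight_apply, Measure.add_apply, Measure.smul_apply, Measure.coe_finsetSum,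
    Finset.sum_apply, smul_eq_mul]
  rw [lintegral_add_left measurable_const, lintegral_finsetSum _ fun i _ => hR i,
    lintegral_const]
  congr 1
  · ring
  · refine sum_congr rfl fun i _ => ?_
    rw [Measure.bind_apply hA R.aemeasurable,
      lintegral_map (R.measurable_coe hA) (measurable_pi_apply i)]

lemma comp_mvpsWeight_succ (μ : Measure (ℕ → X)) : mvpsWeight θ ν R (n + 1) ∘ₘ μ
    = mvpsWeight θ ν R n ∘ₘ μ + R ∘ₘ μ.map (fun x => x n) := by
  rw [comp_mvpsWeight, comp_mvpsWeight, sum_range_succ, add_assoc]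

lemma map_eval_eq_of_comp_mvpsWeight {μ : Measure (ℕ → X)} [IsProbabilityMeasure μ]
    (hν : R.Invariant ν) (hθ : θ ≠ 0) (hθ' : θ ≠ ∞)
    (h : ∀ n : ℕ, mvpsWeight θ ν R n ∘ₘ μ = (θ + n) • μ.map (fun x => x n)) (n : ℕ) :
    μ.map (fun x => x n) = ν := by
  induction n using Nat.strong_induction_on with
  | _ n ih =>
  refine Measure.smul_left_cancel (c := θ + n) (by simp [hθ]) (by simp [hθ']) ?_
  rw [← h n, comp_mvpsWeight, measure_univ, mul_one,
    sum_congr rfl fun i hi => by rw [ih i (mem_range.1 hi), hν.def]]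
  simp [add_smul, Nat.cast_smul_eq_nsmul]

lemma map_eval_succ_eq_of_comp_mvpsWeight {μ : Measure (ℕ → X)}
    (hν : R.Invariant ν) (hR : ∀ᵐ y ∂ν, R.Invariant (R y))
    (hμ : ∀ i, μ.map (fun x => x i) ≪ ν) (hθ : θ ≠ 0) (hθ' : θ ≠ ∞)
    (hn : mvpsWeight θ ν R n ∘ₘ μ = (θ + n) • μ.map (fun x => x n))
    (hn' : mvpsWeight θ ν R (n + 1) ∘ₘ μ = (θ + (n + 1 : ℕ)) • μ.map (fun x => x (n + 1))) :
    μ.map (fun x => x (n + 1)) = μ.map (fun x => x n) := by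
  have hx : ∀ᵐ x ∂μ, ∀ i, R.Invariant (R (x i)) := ae_all_iff.2 fun i =>
    ae_of_ae_map (measurable_pi_apply i).aemeasurable ((hμ i).ae_le hR)
  have hc : θ + n ≠ 0 := by simp [hθ]
  have hc' : θ + n ≠ ∞ := by simp [hθ']
  have hρ : R.Invariant (μ.map (fun x => x n)) := by
    have hW := Kernel.invariant_comp
      (hx.mono fun x hx => hν.mvpsWeight (θ := θ) (n := n) fun i _ => hx i)
    rw [hn] at hW
    simpa [smul_smul, ENNReal.inv_mul_cancel hc hc'] using hW.smul (θ + n)⁻¹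
  refine Measure.smul_left_cancel (c := θ + (n + 1 : ℕ)) (by simp [hθ]) (by simp [hθ']) ?_
  rw [← hn', comp_mvpsWeight_succ, hn, hρ.def, Nat.cast_succ, ← add_assoc,
    add_smul (θ + n) 1, one_smul]

end MVPSWeight

lemma comap_fin_le_comap_fin_succ {Ω X : Type*} [MeasurableSpace X] (Xseq : ℕ → Ω → X) (n : ℕ) :
    MeasurableSpace.comap (fun ω (i : Fin n) => Xseq i ω) inferInstance
      ≤ MeasurableSpace.comap (fun ω (i : Fin (n + 1)) => Xseq i ω) inferInstance := by
  rintro _ ⟨S, hS, rfl⟩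
  exact ⟨(fun x (i : Fin n) => x i.castSucc) ⁻¹' S,
    measurable_pi_lambda _ (fun i => measurable_pi_apply _) hS, rfl⟩

lemma integral_mul_indicator_one_comp {Ω β : Type*} [MeasurableSpace Ω] {μ : Measure Ω}
    (f : Ω → ℝ) {g : Ω → β} {S : Set β} (hS : MeasurableSet (g ⁻¹' S)) :
    ∫ ω, f ω * S.indicator (fun _ => (1 : ℝ)) (g ω) ∂μ = ∫ ω in g ⁻¹' S, f ω ∂μ := by
  rw [← integral_indicator hS]
  congr 1 with ω
  by_cases h : g ω ∈ S <;> simp [h]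

lemma integral_indicator_one_comp {Ω X : Type*} [MeasurableSpace Ω] [MeasurableSpace X]
    {μ : Measure Ω} {f : Ω → X} (hf : Measurable f) {A : Set X} (hA : MeasurableSet A) :
    ∫ ω, A.indicator (fun _ => (1 : ℝ)) (f ω) ∂μ = (μ.map f).real A := by
  rw [← integral_map hf.aemeasurable (stronglyMeasurable_const.indicator hA).aestronglyMeasurable]
  exact integral_indicator_one hA

lemma condExp_indicator_one_comp_ae_eq {Ω X : Type*} {m mΩ : MeasurableSpace Ω}
    [MeasurableSpace X] {P : Measure Ω} [IsFiniteMeasure P] (hm : m ≤ mΩ) {f g : Ω → X}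
    (hf : Measurable f) (hg : Measurable g) {A : Set X} (hA : MeasurableSet A)
    (h : ∀ s, MeasurableSet[m] s → (P.restrict s).map f = (P.restrict s).map g) :
    P[fun ω => A.indicator (fun _ => (1 : ℝ)) (f ω) | m]
      =ᵐ[P] P[fun ω => A.indicator (fun _ => (1 : ℝ)) (g ω) | m] := by
  have hint : ∀ {k : Ω → X}, Measurable k →
      Integrable (fun ω => A.indicator (fun _ => (1 : ℝ)) (k ω)) P :=
    fun hk => (integrable_const (1 : ℝ)).indicator (hk hA)
  refine (ae_eq_condExp_of_forall_setIntegral_eq hm (hint hf)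
    (fun s _ _ => integrable_condExp.integrableOn) (fun s hs _ => ?_)
    stronglyMeasurable_condExp.aestronglyMeasurable).symm
  rw [setIntegral_condExp hm (hint hg) hs, integral_indicator_one_comp hf hA,
    integral_indicator_one_comp hg hA, h s hs]

lemma comp_mvpsWeight_map_restrict {Ω X : Type*} [MeasurableSpace Ω] [MeasurableSpace X]
    {P : Measure Ω} [IsFiniteMeasure P] {ν : Measure X} [IsProbabilityMeasure ν]
    {R : Kernel X X} [IsMarkovKernel R] {θ : ℝ} {Xseq : ℕ → Ω → X}
    (hθ : 0 < θ) (hX : ∀ n, Measurable (Xseq n)) {n : ℕ}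
    (hpred : ∀ A : Set X, MeasurableSet A → ∀ S : Set (Fin n → X), MeasurableSet S →
      ∫ ω, Set.indicator A (fun _ => (1 : ℝ)) (Xseq n ω) *
          Set.indicator S (fun _ => (1 : ℝ)) (fun i : Fin n => Xseq i ω) ∂P
        = ∫ ω, ((θ * (ν A).toReal + ∑ i ∈ range n, (R (Xseq i ω) A).toReal) / (θ + n)) *
            Set.indicator S (fun _ => (1 : ℝ)) (fun i : Fin n => Xseq i ω) ∂P)
    {s : Set Ω}
    (hs : MeasurableSet[MeasurableSpace.comap (fun ω (i : Fin n) => Xseq i ω) inferInstance] s) :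
    mvpsWeight (ENNReal.ofReal θ) ν R n ∘ₘ (P.restrict s).map (fun ω i => Xseq i ω)
      = (ENNReal.ofReal θ + n) • ((P.restrict s).map (fun ω i => Xseq i ω)).map (fun x => x n) := by
  obtain ⟨S, hS, rfl⟩ := hs
  have hY : Measurable fun ω i => Xseq i ω := measurable_pi_lambda _ hX
  have hs : MeasurableSet ((fun ω (i : Fin n) => Xseq i ω) ⁻¹' S) :=
    measurable_pi_lambda (fun ω (i : Fin n) => Xseq i ω) (fun i => hX i) hS
  have := isFiniteKernel_mvpsWeight (ν := ν) (R := R) (n := n) (ENNReal.ofReal_ne_top (r := θ))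
  have hmap : ((P.restrict _).map fun ω i => Xseq i ω).map (fun x => x n)
      = (P.restrict ((fun ω (i : Fin n) => Xseq i ω) ⁻¹' S)).map (Xseq n) :=
    Measure.map_map (measurable_pi_apply n) hY
  have hc : (ENNReal.ofReal θ + n).toReal = θ + n := by
    rw [ENNReal.toReal_add ENNReal.ofReal_ne_top (ENNReal.natCast_ne_top n),
      ENNReal.toReal_ofReal hθ.le, ENNReal.toReal_natCast]
  rw [hmap]
  ext A hA
  have h := hpred A hA S hS
  rw [integral_mul_indicator_one_comp _ hs, integral_mul_indicator_one_comp _ hs,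
    integral_indicator_one_comp (hX n) hA, integral_div] at h
  rw [← measureReal_eq_measureReal_iff (measure_ne_top _ _) (by simp [ENNReal.mul_eq_top]),
    Measure.measureReal_comp_apply hA,
    integral_map (f := fun x => (mvpsWeight (ENNReal.ofReal θ) ν R n x).real A) hY.aemeasurable
      (Kernel.measurable_coe _ hA).ennreal_toReal.aestronglyMeasurable,
    measureReal_ennreal_smul_apply]
  simp only [mvpsWeight_real_apply hθ.le]
  rw [h, hc, mul_div_cancel₀ _ (by positivity)]
  simp only [measureReal_def]

theorem balanced_mvps_stationary_self_averaging_cid_general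
    {Ω X : Type*} [MeasurableSpace Ω] [MeasurableSpace X]
    (P : Measure Ω) [IsProbabilityMeasure P]
    (ν : Measure X) [IsProbabilityMeasure ν]
    (θ : ℝ) (hθ : 0 < θ)
    (R : Kernel X X) [IsMarkovKernel R]
    (Xseq : ℕ → Ω → X) (hXmeas : ∀ n, Measurable (Xseq n))
    -- predictive distributions of the balanced MVPS, in integrated (test-set) form
    (hpred : ∀ n : ℕ, ∀ A : Set X, MeasurableSet A →
      ∀ S : Set (Fin n → X), MeasurableSet S →
      ∫ ω, Set.indicator A (fun _ => (1 : ℝ)) (Xseq n ω) *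
          Set.indicator S (fun _ => (1 : ℝ)) (fun i : Fin n => Xseq i ω) ∂P
        = ∫ ω, ((θ * (ν A).toReal + ∑ i ∈ range n, (R (Xseq i ω) A).toReal) / (θ + n)) *
            Set.indicator S (fun _ => (1 : ℝ)) (fun i : Fin n => Xseq i ω) ∂P)
    -- stationarity of R w.r.t. ν
    (hstat : ∀ A : Set X, MeasurableSet A → ∫⁻ x, R x A ∂ν = ν A)
    -- self-averaging of R, ν-a.e.
    (hself : ∀ᵐ x ∂ν, ∀ A : Set X, MeasurableSet A → ∫⁻ y, R y A ∂(R x) = R x A) :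
    ∀ n : ℕ, ∀ A : Set X, MeasurableSet A →
      (P[(fun ω => Set.indicator A (fun _ => (1 : ℝ)) (Xseq (n + 1) ω)) |
          MeasurableSpace.comap (fun ω (i : Fin n) => Xseq i ω) inferInstance])
        =ᵐ[P]
      (P[(fun ω => Set.indicator A (fun _ => (1 : ℝ)) (Xseq n ω)) |
          MeasurableSpace.comap (fun ω (i : Fin n) => Xseq i ω) inferInstance]) := by
  intro n A hA
  have hY : Measurable fun ω i => Xseq i ω := measurable_pi_lambda _ hXmeas
  have hθ0 : ENNReal.ofReal θ ≠ 0 := (ENNReal.ofReal_pos.2 hθ).ne'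
  have hν : R.Invariant ν := Kernel.invariant_iff_lintegral.2 hstat
  have hR : ∀ᵐ y ∂ν, R.Invariant (R y) := hself.mono fun _ => Kernel.invariant_iff_lintegral.2
  have := Measure.isProbabilityMeasure_map (μ := P) hY.aemeasurable
  have hlaw := map_eval_eq_of_comp_mvpsWeight hν hθ0 ENNReal.ofReal_ne_top
    fun n => by simpa using comp_mvpsWeight_map_restrict hθ hXmeas (hpred n) MeasurableSet.univ
  refine condExp_indicator_one_comp_ae_eq
    (measurable_pi_lambda (fun ω (i : Fin n) => Xseq i ω) fun i => hXmeas i).comap_le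
    (hXmeas (n + 1)) (hXmeas n) hA fun s hs => ?_
  have hμ : ∀ i, ((P.restrict s).map fun ω i => Xseq i ω).map (fun x => x i) ≪ ν := fun i => by
    rw [← hlaw i]
    exact Measure.absolutelyContinuous_of_le
      (Measure.map_mono (Measure.map_mono Measure.restrict_le_self hY) (measurable_pi_apply i))
  simpa [Measure.map_map (measurable_pi_apply _) hY, Function.comp_def] using
    map_eval_succ_eq_of_comp_mvpsWeight hν hR hμ hθ0 ENNReal.ofReal_ne_top
      (comp_mvpsWeight_map_restrict hθ hXmeas (hpred n) hs)
      (comp_mvpsWeight_map_restrict hθ hXmeas (hpred (n + 1))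
        (comap_fin_le_comap_fin_succ Xseq n s hs))

/-- For a balanced MVPS with probability-kernel reinforcement `R`, if `R` is stationary
w.r.t. `ν` and self-averaging, then the process is conditionally identically distributed:
`P(X_{n+2} ∈ A | X₁,…,Xₙ) = P(X_{n+1} ∈ A | X₁,…,Xₙ)` a.s. for every measurable `A`. -/
theorem balanced_mvps_stationary_self_averaging_cid
    {Ω X : Type*} [MeasurableSpace Ω] [MeasurableSpace X] [StandardBorelSpace X]
    (P : Measure Ω) [IsProbabilityMeasure P]
    (ν : Measure X) [IsProbabilityMeasure ν]
    (θ : ℝ) (hθ : 0 < θ)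
    (R : Kernel X X) [IsMarkovKernel R]
    (Xseq : ℕ → Ω → X) (hXmeas : ∀ n, Measurable (Xseq n))
    -- X₁ ∼ ν
    (hinit : Measure.map (Xseq 0) P = ν)
    -- predictive distributions of the balanced MVPS, in integrated (test-set) form
    (hpred : ∀ n : ℕ, ∀ A : Set X, MeasurableSet A →
      ∀ S : Set (Fin n → X), MeasurableSet S →
      ∫ ω, Set.indicator A (fun _ => (1 : ℝ)) (Xseq n ω) *
          Set.indicator S (fun _ => (1 : ℝ)) (fun i : Fin n => Xseq i ω) ∂P
        = ∫ ω, ((θ * (ν A).toReal + ∑ i ∈ range n, (R (Xseq i ω) A).toReal) / (θ + n)) *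
            Set.indicator S (fun _ => (1 : ℝ)) (fun i : Fin n => Xseq i ω) ∂P)
    -- stationarity of R w.r.t. ν
    (hstat : ∀ A : Set X, MeasurableSet A → ∫⁻ x, R x A ∂ν = ν A)
    -- self-averaging of R, ν-a.e.
    (hself : ∀ᵐ x ∂ν, ∀ A : Set X, MeasurableSet A → ∫⁻ y, R y A ∂(R x) = R x A) :
    ∀ n : ℕ, ∀ A : Set X, MeasurableSet A →
      (P[(fun ω => Set.indicator A (fun _ => (1 : ℝ)) (Xseq (n + 1) ω)) |
          MeasurableSpace.comap (fun ω (i : Fin n) => Xseq i ω) inferInstance])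
        =ᵐ[P]
      (P[(fun ω => Set.indicator A (fun _ => (1 : ℝ)) (Xseq n ω)) |
          MeasurableSpace.comap (fun ω (i : Fin n) => Xseq i ω) inferInstance]) :=
  balanced_mvps_stationary_self_averaging_cid_general P ν θ hθ R Xseq hXmeas hpred hstat hself
end

section
/- Let X = {1,2,3,4}, ν₁, ν₂ ∈ (0,1) with ν₁ + ν₂ = 1/2, ν = (ν₁, ν₂, ν₁, ν₂), and let R be the 4×4 matrix with rows R₁ = (ν₁, ν₂, 0, 0), R₂ = (2ν₁, 2ν₂, 0, 0), R₃ = (0, 0, ν₁, ν₂), R₄ = (0, 0, 2ν₁, 2ν₂). Let (Xₙ)ₙ≥1 be the MVPS(1, ν, R), i.e. X₁ ∼ ν and Pₙ(·) := P(X_{n+1} ∈ · | X₁,…,Xₙ) = (ν(·) + Σᵢ₌₁ⁿ R_{Xᵢ}(·))/(1 + Σᵢ₌₁ⁿ R_{Xᵢ}(X)). Then for every x ∈ X, (Pₙ({x}))ₙ≥0 is a martingale with respect to the natural filtration, i.e. (Xₙ) is conditionally identically distributed; yet R₁(X) = 1/2 ≠ 1 = R₂(X), so the MVPS is not balanced.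 -/
/-!
Colours 1, 2 and colours 3, 4 form two blocks, and inside each block the urn composition stays
proportional to `(ν₁, ν₂)`: every reachable composition is `A • (ν₁, ν₂, 0, 0) + B • (0, 0, ν₁, ν₂)`
with `A, B > 0`, of total mass `(A + B) / 2`. Drawing the first colour of a block adds `1` to its
weight and the second adds `2`, and the chance of drawing a second colour is `2ν₂` whatever the
block, so the block weights evolve like a Pólya urn whose random reinforcement is independent of
the block drawn. This gives `∑ z, Pₙ{z} · Pₙ₊₁{x | Xₙ₊₁ = z} = Pₙ{x}` on that cone, and since the
history takes finitely many values, conditioning on it is a finite sum over its atoms.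
-/

open MeasureTheory Finset

section FinitePartition

variable {Ω α β : Type*} [MeasurableSpace Ω] {P : Measure Ω} [MeasurableSpace α]
  [MeasurableSpace β] [MeasurableSingletonClass β]

lemma setIntegral_preimage_eq_sum [Fintype β] {V : Ω → β} (hV : Measurable V) {f : Ω → ℝ}
    (hf : Integrable f P) (T : Set β) :
    ∫ ω in V ⁻¹' T, f ω ∂P = ∑ t ∈ (Set.toFinite T).toFinset, ∫ ω in V ⁻¹' {t}, f ω ∂P := by
  rw [← integral_biUnion_finset _ (fun t _ => hV (measurableSet_singleton t))
    ((Set.pairwiseDisjoint_fiber V T).subset (by simp)) fun t _ => hf.integrableOn,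
    Finset.set_biUnion_preimage_singleton, Set.Finite.coe_toFinset]

lemma setIntegral_comp_eq_sum [Fintype α] [MeasurableSingletonClass α] [IsFiniteMeasure P]
    {Y : Ω → α} (hY : Measurable Y) (s : Set Ω) (h : α → ℝ) :
    ∫ ω in s, h (Y ω) ∂P = ∑ z, h z * P.real (Y ⁻¹' {z} ∩ s) := by
  rw [← integral_map hY.aemeasurable (measurable_of_finite h).aestronglyMeasurable,
    integral_fintype Integrable.of_finite]
  refine Finset.sum_congr rfl fun z _ => ?_
  rw [map_measureReal_apply hY (measurableSet_singleton z), measureReal_restrict_apply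
    (hY (measurableSet_singleton z)), smul_eq_mul, mul_comm]

theorem condExp_comap_ae_eq_comp [Fintype β] [IsFiniteMeasure P] {V : Ω → β} (hV : Measurable V)
    {f : Ω → ℝ} (hf : Integrable f P) {g : β → ℝ}
    (hfiber : ∀ t, ∫ ω in V ⁻¹' {t}, f ω ∂P = g t * P.real (V ⁻¹' {t})) :
    P[f | MeasurableSpace.comap V ‹_›] =ᵐ[P] g ∘ V := by
  have hg : Integrable (g ∘ V) P := Integrable.of_finite.comp_measurable hV
  refine (ae_eq_condExp_of_forall_setIntegral_eq hV.comap_le hf (fun _ _ _ => hg.integrableOn)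
    ?_ ((measurable_of_finite g).comp (comap_measurable V)).aestronglyMeasurable).symm
  rintro _ ⟨T, -, rfl⟩ -
  rw [setIntegral_preimage_eq_sum hV hf, setIntegral_preimage_eq_sum hV hg]
  refine Finset.sum_congr rfl fun t _ => ?_
  rw [hfiber, setIntegral_congr_fun (g := fun _ => g t) (hV (measurableSet_singleton t))
    (fun ω (hω : V ω = t) => by simp [hω]), setIntegral_const, smul_eq_mul, mul_comm]

theorem condExp_comp_ae_eq_sum [Fintype β] [Fintype α] [MeasurableSingletonClass α]
    [IsFiniteMeasure P] {V : Ω → β} {Y : Ω → α} (hV : Measurable V) (hY : Measurable Y)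
    {p : β → α → ℝ} (hp : ∀ t z, P.real (Y ⁻¹' {z} ∩ V ⁻¹' {t}) = p t z * P.real (V ⁻¹' {t}))
    (F : β → α → ℝ) :
    P[fun ω => F (V ω) (Y ω) | MeasurableSpace.comap V ‹_›]
      =ᵐ[P] fun ω => ∑ z, p (V ω) z * F (V ω) z := by
  have hF : Integrable (fun ω => F (V ω) (Y ω)) P :=
    Integrable.comp_measurable (g := fun q : β × α => F q.1 q.2) .of_finite (hV.prodMk hY)
  refine condExp_comap_ae_eq_comp (g := fun t => ∑ z, p t z * F t z) hV hF fun t => ?_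
  rw [setIntegral_congr_fun (g := fun ω => F t (Y ω)) (hV (measurableSet_singleton t))
    (fun ω (hω : V ω = t) => by simp only [hω]), setIntegral_comp_eq_sum hY, Finset.sum_mul]
  refine Finset.sum_congr rfl fun z _ => ?_
  rw [hp]; ring

lemma measureReal_inter_eq_of_integral_indicator [MeasurableSingletonClass α] {V : Ω → β}
    {Y : Ω → α} (hV : Measurable V) (hY : Measurable Y) {q : β → ℝ} {z : α} {t : β}
    (h : ∫ ω, ({z} : Set α).indicator (fun _ => (1 : ℝ)) (Y ω) *
        ({t} : Set β).indicator (fun _ => (1 : ℝ)) (V ω) ∂P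
      = ∫ ω, q (V ω) * ({t} : Set β).indicator (fun _ => (1 : ℝ)) (V ω) ∂P) :
    P.real (Y ⁻¹' {z} ∩ V ⁻¹' {t}) = q t * P.real (V ⁻¹' {t}) := by
  have hVt := hV (measurableSet_singleton t)
  have hYz := hY (measurableSet_singleton z)
  have hl : (fun ω => ({z} : Set α).indicator (fun _ => (1 : ℝ)) (Y ω) *
      ({t} : Set β).indicator (fun _ => (1 : ℝ)) (V ω)) = (Y ⁻¹' {z} ∩ V ⁻¹' {t}).indicator 1 := by
    ext ω; by_cases hz : Y ω = z <;> by_cases ht : V ω = t <;> simp [hz, ht]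
  have hr : (fun ω => q (V ω) * ({t} : Set β).indicator (fun _ => (1 : ℝ)) (V ω))
      = fun ω => q t * (V ⁻¹' {t}).indicator 1 ω := by
    ext ω; by_cases ht : V ω = t <;> simp [ht]
  rwa [hl, hr, integral_indicator_one (hYz.inter hVt), integral_const_mul,
    integral_indicator_one hVt] at h

end FinitePartition

noncomputable section Mvps

variable {α : Type*} (ν : α → ℝ) (R : α → α → ℝ)

def mvpsComposition {n : ℕ} (t : Fin n → α) : α → ℝ := ν + ∑ i, R (t i)

def mvpsPredictive [Fintype α] {n : ℕ} (t : Fin n → α) (x : α) : ℝ :=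
  mvpsComposition ν R t x / ∑ y, mvpsComposition ν R t y

/-- One more draw from an urn of composition `c` leaves the predictive probabilities unchanged
in expectation. -/
def IsCidComposition [Fintype α] (c : α → ℝ) : Prop :=
  ∀ x, ∑ z, (c z / ∑ y, c y) * ((c + R z) x / ∑ y, (c + R z) y) = c x / ∑ y, c y

lemma mvpsComposition_snoc {n : ℕ} (t : Fin n → α) (z : α) :
    mvpsComposition ν R (Fin.snoc t z) = mvpsComposition ν R t + R z := by
  simp [mvpsComposition, Fin.sum_univ_castSucc, add_assoc]

lemma mvpsComposition_mem {S : Set (α → ℝ)} (h0 : ν ∈ S) (hstep : ∀ c ∈ S, ∀ z, c + R z ∈ S)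
    {n : ℕ} (t : Fin n → α) : mvpsComposition ν R t ∈ S := by
  induction t using Fin.snocInduction with
  | elim0 => simpa [mvpsComposition]
  | snoc t z ih => rw [mvpsComposition_snoc]; exact hstep _ ih z

lemma mvpsPredictive_eq_div_sum_range [Fintype α] {Ω : Type*} (hν : ∑ y, ν y = 1) (X : ℕ → Ω → α)
    (n : ℕ) (ω : Ω) (x : α) :
    mvpsPredictive ν R (fun i : Fin n => X i ω) x
      = (ν x + ∑ i ∈ range n, R (X i ω) x) / (1 + ∑ i ∈ range n, ∑ y, R (X i ω) y) := by
  simp only [mvpsPredictive, mvpsComposition, Pi.add_apply, Finset.sum_apply,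
    Finset.sum_add_distrib, hν]
  rw [Finset.sum_comm, Fin.sum_univ_eq_sum_range (fun i => R (X i ω) x),
    Fin.sum_univ_eq_sum_range (fun i => ∑ y, R (X i ω) y)]

theorem sum_mvpsPredictive_mul_snoc [Fintype α] {S : Set (α → ℝ)} (h0 : ν ∈ S)
    (hstep : ∀ c ∈ S, ∀ z, c + R z ∈ S)
    (hcid : ∀ c ∈ S, IsCidComposition R c)
    {n : ℕ} (t : Fin n → α) (x : α) :
    ∑ z, mvpsPredictive ν R t z * mvpsPredictive ν R (Fin.snoc t z) x
      = mvpsPredictive ν R t x := by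
  simpa only [mvpsPredictive, mvpsComposition_snoc] using
    hcid _ (mvpsComposition_mem ν R h0 hstep t) x

end Mvps

section Example

variable (ν₁ ν₂ : ℝ)

def exampleNu : Fin 4 → ℝ := ![ν₁, ν₂, ν₁, ν₂]

def exampleR : Fin 4 → Fin 4 → ℝ :=
  ![![ν₁, ν₂, 0, 0], ![2 * ν₁, 2 * ν₂, 0, 0], ![0, 0, ν₁, ν₂], ![0, 0, 2 * ν₁, 2 * ν₂]]

def blockCone : Set (Fin 4 → ℝ) :=
  {c | ∃ A B : ℝ, 0 < A ∧ 0 < B ∧ c = A • ![ν₁, ν₂, 0, 0] + B • ![0, 0, ν₁, ν₂]}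

lemma exampleNu_mem_blockCone : exampleNu ν₁ ν₂ ∈ blockCone ν₁ ν₂ :=
  ⟨1, 1, one_pos, one_pos, by ext y; fin_cases y <;> simp [exampleNu]⟩

lemma add_exampleR_mem_blockCone {c : Fin 4 → ℝ} (hc : c ∈ blockCone ν₁ ν₂) (z : Fin 4) :
    c + exampleR ν₁ ν₂ z ∈ blockCone ν₁ ν₂ := by
  obtain ⟨A, B, hA, hB, rfl⟩ := hc
  refine ⟨A + ![1, 2, 0, 0] z, B + ![0, 0, 1, 2] z, ?_, ?_, ?_⟩
  · fin_cases z <;> simp <;> linarith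
  · fin_cases z <;> simp <;> linarith
  · ext y; fin_cases z <;> fin_cases y <;> simp [exampleR] <;> ring

lemma isCidComposition_of_mem_blockCone (hsum : ν₁ + ν₂ = 1 / 2) {c : Fin 4 → ℝ}
    (hc : c ∈ blockCone ν₁ ν₂) : IsCidComposition (exampleR ν₁ ν₂) c := by
  intro x
  obtain ⟨A, B, hA, hB, rfl⟩ := hc
  obtain rfl : ν₂ = 1 / 2 - ν₁ := by linarith
  have htotal : ∑ y, (A • ![ν₁, 1 / 2 - ν₁, 0, 0] + B • ![0, 0, ν₁, 1 / 2 - ν₁]) y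
      = (A + B) / 2 := by
    simp [Fin.sum_univ_four]; ring
  have htotal_add : ∀ z, ∑ y, (A • ![ν₁, 1 / 2 - ν₁, 0, 0] + B • ![0, 0, ν₁, 1 / 2 - ν₁]
      + exampleR ν₁ (1 / 2 - ν₁) z) y = (A + B) / 2 + ![1 / 2, 1, 1 / 2, 1] z := by
    intro z; fin_cases z <;> simp [Fin.sum_univ_four, exampleR] <;> ring
  rw [htotal]
  simp only [htotal_add]
  have : A + B ≠ 0 := by positivity
  have : A + B + 1 ≠ 0 := by positivity
  have : A + B + 2 ≠ 0 := by positivity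
  fin_cases x <;> simp [Fin.sum_univ_four, exampleR] <;> field_simp <;> ring

end Example

theorem unbalanced_cid_mvps_example_general
    {Ω : Type*} [MeasurableSpace Ω]
    (P : Measure Ω) [IsProbabilityMeasure P]
    (ν₁ ν₂ : ℝ)
    (hsum : ν₁ + ν₂ = 1 / 2)
    (ν : Fin 4 → ℝ) (hν : ν = ![ν₁, ν₂, ν₁, ν₂])
    (R : Fin 4 → Fin 4 → ℝ)
    (hR : R = ![![ν₁, ν₂, 0, 0], ![2 * ν₁, 2 * ν₂, 0, 0],
                ![0, 0, ν₁, ν₂], ![0, 0, 2 * ν₁, 2 * ν₂]])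
    (Xseq : ℕ → Ω → Fin 4) (hXmeas : ∀ n, Measurable (Xseq n))
    -- predictive distributions of the MVPS(1, ν, R), in integrated (test-set) form
    (hpred : ∀ n : ℕ, ∀ x : Fin 4, ∀ S : Set (Fin n → Fin 4), MeasurableSet S →
      ∫ ω, Set.indicator {x} (fun _ => (1 : ℝ)) (Xseq n ω) *
          Set.indicator S (fun _ => (1 : ℝ)) (fun i : Fin n => Xseq i ω) ∂P
        = ∫ ω, ((ν x + ∑ i ∈ range n, R (Xseq i ω) x) /
              (1 + ∑ i ∈ range n, ∑ y, R (Xseq i ω) y)) *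
            Set.indicator S (fun _ => (1 : ℝ)) (fun i : Fin n => Xseq i ω) ∂P) :
    -- (Pₙ({x}))ₙ is a martingale w.r.t. the natural filtration: the process is c.i.d.
    (∀ x : Fin 4, ∀ n : ℕ,
      (P[(fun ω => (ν x + ∑ i ∈ range (n + 1), R (Xseq i ω) x) /
            (1 + ∑ i ∈ range (n + 1), ∑ y, R (Xseq i ω) y)) |
          MeasurableSpace.comap (fun ω (i : Fin n) => Xseq i ω) inferInstance])
        =ᵐ[P] fun ω => (ν x + ∑ i ∈ range n, R (Xseq i ω) x) /
            (1 + ∑ i ∈ range n, ∑ y, R (Xseq i ω) y)) ∧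
    -- yet the MVPS is unbalanced: total masses of rows 1 and 2 differ
    (∑ y, R 0 y = 1 / 2) ∧ (∑ y, R 1 y = 1) := by
  obtain rfl : ν = exampleNu ν₁ ν₂ := hν
  obtain rfl : R = exampleR ν₁ ν₂ := hR
  have hν : ∑ y, exampleNu ν₁ ν₂ y = 1 := by simp [exampleNu, Fin.sum_univ_four]; linarith
  simp only [← mvpsPredictive_eq_div_sum_range _ _ hν] at hpred ⊢
  refine ⟨fun x n => ?_, by simp [exampleR, Fin.sum_univ_four]; linarith,
    by simp [exampleR, Fin.sum_univ_four]; linarith⟩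
  have hV : Measurable fun ω (i : Fin n) => Xseq i ω := measurable_pi_lambda _ fun i => hXmeas i
  have hlaw := fun t z => measureReal_inter_eq_of_integral_indicator hV (hXmeas n)
    (q := fun t => mvpsPredictive _ _ t z)
    (hpred n z {t} (measurableSet_singleton t))
  have hsnoc : ∀ ω, (fun i : Fin (n + 1) => Xseq i ω)
      = Fin.snoc (fun i : Fin n => Xseq i ω) (Xseq n ω) := fun ω => (Fin.snoc_init_self _).symm
  simp only [hsnoc]
  refine (condExp_comp_ae_eq_sum hV (hXmeas n) hlaw
    (fun t z => mvpsPredictive _ _ (Fin.snoc t z) x)).trans (ae_of_all _ fun ω => ?_)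
  exact sum_mvpsPredictive_mul_snoc _ _ (exampleNu_mem_blockCone ν₁ ν₂)
    (fun _ => add_exampleR_mem_blockCone ν₁ ν₂)
    (fun _ => isCidComposition_of_mem_blockCone ν₁ ν₂ hsum) _ x

/-- The four-color unbalanced MVPS with initial composition `ν = (ν₁, ν₂, ν₁, ν₂)`
(`ν₁ + ν₂ = 1/2`) and block reinforcement matrix `R` as in Example 4.11:
the predictive probabilities of every color form a martingale (the process is c.i.d.),
yet the model is unbalanced since rows 1 and 2 of `R` have total masses `1/2 ≠ 1`. -/
theorem unbalanced_cid_mvps_example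
    {Ω : Type*} [MeasurableSpace Ω]
    (P : Measure Ω) [IsProbabilityMeasure P]
    (ν₁ ν₂ : ℝ) (h1 : 0 < ν₁) (h1' : ν₁ < 1) (h2 : 0 < ν₂) (h2' : ν₂ < 1)
    (hsum : ν₁ + ν₂ = 1 / 2)
    (ν : Fin 4 → ℝ) (hν : ν = ![ν₁, ν₂, ν₁, ν₂])
    (R : Fin 4 → Fin 4 → ℝ)
    (hR : R = ![![ν₁, ν₂, 0, 0], ![2 * ν₁, 2 * ν₂, 0, 0],
                ![0, 0, ν₁, ν₂], ![0, 0, 2 * ν₁, 2 * ν₂]])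
    (Xseq : ℕ → Ω → Fin 4) (hXmeas : ∀ n, Measurable (Xseq n))
    -- X₁ ∼ ν
    (hinit : ∀ x : Fin 4, (P {ω | Xseq 0 ω = x}).toReal = ν x)
    -- predictive distributions of the MVPS(1, ν, R), in integrated (test-set) form
    (hpred : ∀ n : ℕ, ∀ x : Fin 4, ∀ S : Set (Fin n → Fin 4), MeasurableSet S →
      ∫ ω, Set.indicator {x} (fun _ => (1 : ℝ)) (Xseq n ω) *
          Set.indicator S (fun _ => (1 : ℝ)) (fun i : Fin n => Xseq i ω) ∂P
        = ∫ ω, ((ν x + ∑ i ∈ range n, R (Xseq i ω) x) /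
              (1 + ∑ i ∈ range n, ∑ y, R (Xseq i ω) y)) *
            Set.indicator S (fun _ => (1 : ℝ)) (fun i : Fin n => Xseq i ω) ∂P) :
    -- (Pₙ({x}))ₙ is a martingale w.r.t. the natural filtration: the process is c.i.d.
    (∀ x : Fin 4, ∀ n : ℕ,
      (P[(fun ω => (ν x + ∑ i ∈ range (n + 1), R (Xseq i ω) x) /
            (1 + ∑ i ∈ range (n + 1), ∑ y, R (Xseq i ω) y)) |
          MeasurableSpace.comap (fun ω (i : Fin n) => Xseq i ω) inferInstance])
        =ᵐ[P] fun ω => (ν x + ∑ i ∈ range n, R (Xseq i ω) x) /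
            (1 + ∑ i ∈ range n, ∑ y, R (Xseq i ω) y)) ∧
    -- yet the MVPS is unbalanced: total masses of rows 1 and 2 differ
    (∑ y, R 0 y = 1 / 2) ∧ (∑ y, R 1 y = 1) :=
  unbalanced_cid_mvps_example_general P ν₁ ν₂ hsum ν hν R hR Xseq hXmeas hpred
end

section
/- Let X be a finite set, ν a probability measure on X with ν({x}) > 0 for all x, B₁, …, B_m a partition of X, f : X → (0, ∞), and R the kernel R_x(·) = f(x)·ν(· | B_j) for x ∈ B_j. Assume moreover that ν(f = a | B_j) = ν(f = a) for every j and every a > 0. Let (Xₙ) be the MVPS(θ, ν, R). Then for every n and every measurable A ⊆ X, f(X_{n+1}) given (X₁,…,Xₙ) has distribution equal to the ν-law of f, and f(X_{n+1}) is conditionally independent of the event {X_{n+1} ∈ B_j} given (X₁,…,Xₙ), for each j. -/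
/-!
Testing the predictive identity against events of the past identifies
`P[X_{n+1} ∈ A | X₁,…,Xₙ]` with the predictive mass `(θ ν(A) + Σᵢ R_{Xᵢ}(A)) / (θ + Σᵢ f(Xᵢ))`.
For the block kernel, `ν(f = a | B_j) = ν(f = a)` gives `R_z(f = a) = ν(f = a) f(z)`, so the
predictive mass of `{f = a}` is the constant `ν(f = a)`. Likewise `ν` and every `R_z` give
`{f = a} ∩ B_j` exactly `ν(f = a)` times their mass of `B_j`, and the predictive mass inherits
this factorization, which is the conditional independence.
-/

open MeasureTheory Finset

theorem integrable_comp_of_finite {Ω α : Type*} [MeasurableSpace Ω] [MeasurableSpace α]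
    [Finite α] [MeasurableSingletonClass α] {P : Measure Ω} [IsFiniteMeasure P] {g : Ω → α}
    (hg : Measurable g) (h : α → ℝ) : Integrable (fun ω => h (g ω)) P :=
  Integrable.comp_measurable Integrable.of_finite hg

section ConditionalExpectation

variable {Ω E : Type*} [MeasurableSpace Ω] [MeasurableSpace E] {P : Measure Ω} {past : Ω → E}

theorem condExp_comap_ae_eq_comp_s18 [IsFiniteMeasure P] (hpast : Measurable past)
    {g : Ω → ℝ} {h : E → ℝ} (hg : Integrable g P) (hh : Measurable h)
    (hhi : Integrable (fun ω => h (past ω)) P)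
    (hint : ∀ S, MeasurableSet S → ∫ ω in past ⁻¹' S, g ω ∂P = ∫ ω in past ⁻¹' S, h (past ω) ∂P) :
    P[g | MeasurableSpace.comap past inferInstance] =ᵐ[P] fun ω => h (past ω) := by
  refine (ae_eq_condExp_of_forall_setIntegral_eq hpast.comap_le hg
    (fun _ _ _ => hhi.integrableOn) ?_ ?_).symm
  · rintro _ ⟨S, hS, rfl⟩ -
    exact (hint S hS).symm
  · exact (hh.comp (measurable_iff_comap_le.mpr le_rfl)).aestronglyMeasurable

theorem integral_mul_indicator_comp_eq_setIntegral (hpast : Measurable past)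
    {S : Set E} (hS : MeasurableSet S) (F : Ω → ℝ) :
    ∫ ω, F ω * S.indicator (fun _ => (1 : ℝ)) (past ω) ∂P = ∫ ω in past ⁻¹' S, F ω ∂P := by
  rw [← integral_indicator (hpast hS)]
  congr 1 with ω
  by_cases hω : past ω ∈ S <;> simp [hω]

theorem condExp_ite_ae_eq_sum {X : Type*} [Fintype X] [MeasurableSpace X]
    [MeasurableSingletonClass X] [Finite E] [MeasurableSingletonClass E] [IsFiniteMeasure P]
    {Y : Ω → X} (hY : Measurable Y) (hpast : Measurable past) (q : X → E → ℝ)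
    (hq : ∀ x S, MeasurableSet S →
      ∫ ω in past ⁻¹' S, ({x} : Set X).indicator (fun _ => (1 : ℝ)) (Y ω) ∂P
        = ∫ ω in past ⁻¹' S, q x (past ω) ∂P)
    (s : X → Prop) [DecidablePred s] :
    P[fun ω => if s (Y ω) then (1 : ℝ) else 0 | MeasurableSpace.comap past inferInstance]
      =ᵐ[P] fun ω => ∑ x with s x, q x (past ω) := by
  classical
  have hsplit : (fun ω => if s (Y ω) then (1 : ℝ) else 0)
      = fun ω => ∑ x with s x, ({x} : Set X).indicator (fun _ => (1 : ℝ)) (Y ω) := by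
    ext ω
    simp only [Set.indicator_apply, Set.mem_singleton_iff, sum_ite_eq, mem_filter,
      mem_univ, true_and]
  rw [hsplit]
  refine condExp_comap_ae_eq_comp_s18 (h := fun e => ∑ x with s x, q x e) hpast
    (integrable_finsetSum _ fun x _ => integrable_comp_of_finite hY _) (measurable_of_finite _)
    (integrable_comp_of_finite hpast fun e => ∑ x with s x, q x e) fun S hS => ?_
  rw [integral_finsetSum _ fun x _ => (integrable_comp_of_finite hY _).integrableOn,
    integral_finsetSum _ fun x _ => (integrable_comp_of_finite hpast _).integrableOn]
  exact sum_congr rfl fun x _ => hq x S hS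

end ConditionalExpectation

section Predictive

variable {X : Type*} (θ : ℝ) (ν f : X → ℝ) (R : X → X → ℝ)

noncomputable def predictiveMass {n : ℕ} (p : Fin n → X) (A : Finset X) : ℝ :=
  (θ * ∑ x ∈ A, ν x + ∑ i, ∑ x ∈ A, R (p i) x) / (θ + ∑ i, f (p i))

theorem sum_predictiveMass_singleton {n : ℕ} (p : Fin n → X) (A : Finset X) :
    ∑ x ∈ A, predictiveMass θ ν f R p {x} = predictiveMass θ ν f R p A := by
  simp only [predictiveMass, sum_singleton]
  rw [← sum_div, sum_add_distrib, ← mul_sum, sum_comm]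

variable {θ ν f R}

theorem predictiveMass_eq_mul {A A' : Finset X} {c : ℝ}
    (hR : ∀ z, ∑ x ∈ A, R z x = c * ∑ x ∈ A', R z x)
    (hν : ∑ x ∈ A, ν x = c * ∑ x ∈ A', ν x) {n : ℕ} (p : Fin n → X) :
    predictiveMass θ ν f R p A = c * predictiveMass θ ν f R p A' := by
  simp only [predictiveMass, hν, hR, ← mul_sum]
  ring

theorem predictiveMass_eq_sum (hθ : 0 < θ) (hf : ∀ x, 0 ≤ f x) {A : Finset X}
    (hR : ∀ z, ∑ x ∈ A, R z x = (∑ x ∈ A, ν x) * f z) {n : ℕ} (p : Fin n → X) :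
    predictiveMass θ ν f R p A = ∑ x ∈ A, ν x := by
  have hD : θ + ∑ i, f (p i) ≠ 0 := (add_pos_of_pos_of_nonneg hθ (sum_nonneg fun i _ => hf _)).ne'
  rw [predictiveMass, div_eq_iff hD]
  simp only [hR, ← mul_sum]
  ring

variable [Fintype X] [MeasurableSpace X] [MeasurableSingletonClass X]

theorem condExp_ite_ae_eq_predictiveMass {Ω : Type*} [MeasurableSpace Ω] (P : Measure Ω)
    [IsFiniteMeasure P] {Xseq : ℕ → Ω → X} (hXmeas : ∀ n, Measurable (Xseq n)) (n : ℕ)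
    (hpred : ∀ x : X, ∀ S : Set (Fin n → X), MeasurableSet S →
      ∫ ω, Set.indicator {x} (fun _ => (1 : ℝ)) (Xseq n ω) *
          Set.indicator S (fun _ => (1 : ℝ)) (fun i : Fin n => Xseq i ω) ∂P
        = ∫ ω, ((θ * ν x + ∑ i ∈ range n, R (Xseq i ω) x) /
              (θ + ∑ i ∈ range n, f (Xseq i ω))) *
            Set.indicator S (fun _ => (1 : ℝ)) (fun i : Fin n => Xseq i ω) ∂P)
    (s : X → Prop) [DecidablePred s] :
    P[fun ω => if s (Xseq n ω) then (1 : ℝ) else 0 |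
        MeasurableSpace.comap (fun ω (i : Fin n) => Xseq i ω) inferInstance]
      =ᵐ[P] fun ω => predictiveMass θ ν f R (fun i : Fin n => Xseq i ω) (univ.filter s) := by
  have hpast : Measurable fun ω (i : Fin n) => Xseq i ω := measurable_pi_lambda _ fun i => hXmeas i
  refine (condExp_ite_ae_eq_sum (hXmeas n) hpast (fun x p => predictiveMass θ ν f R p {x})
    (fun x S hS => ?_) s).trans (ae_of_all _ fun ω => sum_predictiveMass_singleton ..)
  rw [← integral_mul_indicator_comp_eq_setIntegral hpast hS,
    ← integral_mul_indicator_comp_eq_setIntegral hpast hS, hpred x S hS]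
  simp only [predictiveMass, sum_singleton, sum_range]

end Predictive

section BlockKernel

variable {X : Type*} [Fintype X] {m : ℕ} {b : X → Fin m} {ν f : X → ℝ} {R : X → X → ℝ}

theorem sum_blockKernel_eq
    (hR : ∀ x y, R x y = if b y = b x then f x * ν y / (∑ z with b z = b x, ν z) else 0)
    (z : X) (A : Finset X) :
    ∑ x ∈ A, R z x = f z * (∑ x ∈ A with b x = b z, ν x) / ∑ x with b x = b z, ν x := by
  rw [sum_filter, mul_sum, sum_div]
  exact sum_congr rfl fun x _ => by rw [hR]; split_ifs <;> simp

theorem sum_blockKernel_level_eq_mul {a : ℝ}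
    (hfcond : ∀ j, (∑ x with b x = j ∧ f x = a, ν x) / (∑ x with b x = j, ν x)
      = ∑ x with f x = a, ν x)
    (hR : ∀ x y, R x y = if b y = b x then f x * ν y / (∑ z with b z = b x, ν z) else 0)
    (z : X) : ∑ x with f x = a, R z x = (∑ x with f x = a, ν x) * f z := by
  rw [sum_blockKernel_eq hR, filter_filter, mul_div_assoc, mul_comm]
  simp only [and_comm (a := f _ = a), hfcond]

theorem sum_level_inter_block_eq_mul {a : ℝ}
    (hfcond : ∀ j, (∑ x with b x = j ∧ f x = a, ν x) / (∑ x with b x = j, ν x)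
      = ∑ x with f x = a, ν x)
    (hν : ∀ x, 0 ≤ ν x) (j : Fin m) :
    ∑ x with f x = a ∧ b x = j, ν x = (∑ x with f x = a, ν x) * ∑ x with b x = j, ν x := by
  simp only [and_comm (a := f _ = a)]
  -- On a block of `ν`-mass zero `hfcond` says nothing about the block (its left side divides
  -- by zero); there nonnegativity of `ν` forces both sides to vanish.
  by_cases h0 : ∑ x with b x = j, ν x = 0
  · rw [h0, mul_zero]
    refine le_antisymm ?_ (sum_nonneg fun x _ => hν x)
    exact h0 ▸ sum_le_sum_of_subset_of_nonneg (monotone_filter_right _ fun _ _ hx => hx.1)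
      fun x _ _ => hν x
  · exact (div_eq_iff h0).mp (hfcond j)

theorem sum_blockKernel_level_inter_block_eq_mul {a : ℝ}
    (hfcond : ∀ j, (∑ x with b x = j ∧ f x = a, ν x) / (∑ x with b x = j, ν x)
      = ∑ x with f x = a, ν x)
    (hR : ∀ x y, R x y = if b y = b x then f x * ν y / (∑ z with b z = b x, ν z) else 0)
    (hν : ∀ x, 0 ≤ ν x) (j : Fin m) (z : X) :
    ∑ x with f x = a ∧ b x = j, R z x = (∑ x with f x = a, ν x) * ∑ x with b x = j, R z x := by
  rw [sum_blockKernel_eq hR, sum_blockKernel_eq hR, filter_filter, filter_filter]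
  by_cases hz : b z = j
  · subst hz
    simp only [and_self, and_assoc]
    rw [sum_level_inter_block_eq_mul hfcond hν]
    ring
  · rw [filter_false_of_mem fun x _ (hx : (f x = a ∧ b x = j) ∧ b x = b z) => hz (hx.2 ▸ hx.1.2),
      filter_false_of_mem fun x _ (hx : b x = j ∧ b x = b z) => hz (hx.2 ▸ hx.1)]
    simp

end BlockKernel

theorem block_mvps_f_conditional_law_and_independence_general
    {Ω X : Type*} [MeasurableSpace Ω] [Fintype X]
    [MeasurableSpace X] [MeasurableSingletonClass X]
    (P : Measure Ω) [IsProbabilityMeasure P]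
    (ν : X → ℝ) (hνpos : ∀ x, 0 < ν x)
    {m : ℕ} (b : X → Fin m) (f : X → ℝ) (hf : ∀ x, 0 < f x)
    (θ : ℝ) (hθ : 0 < θ)
    (R : X → X → ℝ)
    (hR : ∀ x y, R x y =
      if b y = b x then f x * ν y / (∑ z ∈ univ.filter (fun z => b z = b x), ν z) else 0)
    -- the conditional law of f within each block equals its unconditional law
    (hfcond : ∀ (j : Fin m) (a : ℝ),
      (∑ x ∈ univ.filter (fun x => b x = j ∧ f x = a), ν x) /
          (∑ x ∈ univ.filter (fun x => b x = j), ν x)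
        = ∑ x ∈ univ.filter (fun x => f x = a), ν x)
    (Xseq : ℕ → Ω → X) (hXmeas : ∀ n, Measurable (Xseq n))
    -- predictive distributions of the MVPS(θ, ν, R), in integrated (test-set) form
    (hpred : ∀ n : ℕ, ∀ x : X, ∀ S : Set (Fin n → X), MeasurableSet S →
      ∫ ω, Set.indicator {x} (fun _ => (1 : ℝ)) (Xseq n ω) *
          Set.indicator S (fun _ => (1 : ℝ)) (fun i : Fin n => Xseq i ω) ∂P
        = ∫ ω, ((θ * ν x + ∑ i ∈ range n, R (Xseq i ω) x) /
              (θ + ∑ i ∈ range n, f (Xseq i ω))) *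
            Set.indicator S (fun _ => (1 : ℝ)) (fun i : Fin n => Xseq i ω) ∂P) :
    ∀ n : ℕ, ∀ a : ℝ,
      -- conditional law of f(X_{n+1}) given (X₁,…,Xₙ) is the ν-law of f
      ((P[(fun ω => if f (Xseq n ω) = a then (1 : ℝ) else 0) |
          MeasurableSpace.comap (fun ω (i : Fin n) => Xseq i ω) inferInstance])
        =ᵐ[P] fun _ => ∑ x ∈ univ.filter (fun x => f x = a), ν x) ∧
      -- conditional independence of f(X_{n+1}) and {X_{n+1} ∈ B_j} given (X₁,…,Xₙ)
      (∀ j : Fin m,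
        (P[(fun ω => if f (Xseq n ω) = a ∧ b (Xseq n ω) = j then (1 : ℝ) else 0) |
            MeasurableSpace.comap (fun ω (i : Fin n) => Xseq i ω) inferInstance])
          =ᵐ[P] fun ω => (∑ x ∈ univ.filter (fun x => f x = a), ν x) *
            (P[(fun ω' => if b (Xseq n ω') = j then (1 : ℝ) else 0) |
              MeasurableSpace.comap (fun ω' (i : Fin n) => Xseq i ω') inferInstance]) ω) := by
  intro n a
  have hcond := condExp_ite_ae_eq_predictiveMass P hXmeas n (hpred n)
  have hν : ∀ x, 0 ≤ ν x := fun x => (hνpos x).le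
  refine ⟨?_, fun j => ?_⟩
  · exact (hcond fun x => f x = a).trans <| ae_of_all _ fun ω => predictiveMass_eq_sum hθ
      (fun x => (hf x).le) (sum_blockKernel_level_eq_mul (hfcond · a) hR) _
  · filter_upwards [hcond fun x => f x = a ∧ b x = j, hcond fun x => b x = j] with ω h₁ h₂
    rw [h₁, h₂]
    exact predictiveMass_eq_mul (sum_blockKernel_level_inter_block_eq_mul (hfcond · a) hR hν j)
      (sum_level_inter_block_eq_mul (hfcond · a) hν j) _

/-- For the MVPS on a finite set with block-diagonal reinforcement
`R_x = f(x) ν(·|B_j)` for `x ∈ B_j` (blocks given as fibers of `b`), where the law of `f`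
is the same within each block as unconditionally, the conditional law of `f(X_{n+1})`
given the past equals the `ν`-law of `f`, and `f(X_{n+1})` is conditionally independent
of the events `{X_{n+1} ∈ B_j}` given the past. -/
theorem block_mvps_f_conditional_law_and_independence
    {Ω X : Type*} [MeasurableSpace Ω] [Fintype X] [DecidableEq X]
    [MeasurableSpace X] [MeasurableSingletonClass X]
    (P : Measure Ω) [IsProbabilityMeasure P]
    (ν : X → ℝ) (hνpos : ∀ x, 0 < ν x) (hνsum : ∑ x, ν x = 1)
    {m : ℕ} (b : X → Fin m) (f : X → ℝ) (hf : ∀ x, 0 < f x)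
    (θ : ℝ) (hθ : 0 < θ)
    (R : X → X → ℝ)
    (hR : ∀ x y, R x y =
      if b y = b x then f x * ν y / (∑ z ∈ univ.filter (fun z => b z = b x), ν z) else 0)
    -- the conditional law of f within each block equals its unconditional law
    (hfcond : ∀ (j : Fin m) (a : ℝ),
      (∑ x ∈ univ.filter (fun x => b x = j ∧ f x = a), ν x) /
          (∑ x ∈ univ.filter (fun x => b x = j), ν x)
        = ∑ x ∈ univ.filter (fun x => f x = a), ν x)
    (Xseq : ℕ → Ω → X) (hXmeas : ∀ n, Measurable (Xseq n))
    -- X₁ ∼ ν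
    (hinit : ∀ x : X, (P {ω | Xseq 0 ω = x}).toReal = ν x)
    -- predictive distributions of the MVPS(θ, ν, R), in integrated (test-set) form
    (hpred : ∀ n : ℕ, ∀ x : X, ∀ S : Set (Fin n → X), MeasurableSet S →
      ∫ ω, Set.indicator {x} (fun _ => (1 : ℝ)) (Xseq n ω) *
          Set.indicator S (fun _ => (1 : ℝ)) (fun i : Fin n => Xseq i ω) ∂P
        = ∫ ω, ((θ * ν x + ∑ i ∈ range n, R (Xseq i ω) x) /
              (θ + ∑ i ∈ range n, f (Xseq i ω))) *
            Set.indicator S (fun _ => (1 : ℝ)) (fun i : Fin n => Xseq i ω) ∂P) :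
    ∀ n : ℕ, ∀ a : ℝ,
      -- conditional law of f(X_{n+1}) given (X₁,…,Xₙ) is the ν-law of f
      ((P[(fun ω => if f (Xseq n ω) = a then (1 : ℝ) else 0) |
          MeasurableSpace.comap (fun ω (i : Fin n) => Xseq i ω) inferInstance])
        =ᵐ[P] fun _ => ∑ x ∈ univ.filter (fun x => f x = a), ν x) ∧
      -- conditional independence of f(X_{n+1}) and {X_{n+1} ∈ B_j} given (X₁,…,Xₙ)
      (∀ j : Fin m,
        (P[(fun ω => if f (Xseq n ω) = a ∧ b (Xseq n ω) = j then (1 : ℝ) else 0) |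
            MeasurableSpace.comap (fun ω (i : Fin n) => Xseq i ω) inferInstance])
          =ᵐ[P] fun ω => (∑ x ∈ univ.filter (fun x => f x = a), ν x) *
            (P[(fun ω' => if b (Xseq n ω') = j then (1 : ℝ) else 0) |
              MeasurableSpace.comap (fun ω' (i : Fin n) => Xseq i ω') inferInstance]) ω) :=
  block_mvps_f_conditional_law_and_independence_general P ν hνpos b f hf θ hθ R hR hfcond Xseq
    hXmeas hpred
end
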